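/- Let n ≥ 3, let Ω = {x ∈ ℝ^{n+1} : x_4^2 < x_1^2+x_2^2+x_3^2}, and let u(x) = (x_1^2+x_2^2+x_3^2 − x_4^2)/(2√2 ω_n √(x_1^2+x_2^2+x_3^2)). Let Q ∈ ∂Ω with x_4(Q) ≠ 0, and let ν(Q) = (1/√2)·( (x_1,x_2,x_3)/ρ , −x_4/|x_4| , 0, …, 0 ) where ρ = √(x_1^2+x_2^2+x_3^2) evaluated at Q; ν(Q) is the inward unit normal to ∂Ω at Q. Then the directional derivative of u at Q in the direction ν(Q) equals 1/ω_n. -/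

import Mathlib

/-!
On `∂Ω` the numerator `ρ² - x₄²` of `u` vanishes, so by the quotient rule `du(Q)` is just
`d(ρ² - x₄²)(Q)` divided by the denominator `2√2 ωₙ ρ`. Pairing that differential with `ν(Q)`
gives `2(ρ + |x₄|)/√2 = 2√2 ρ`, because `ρ = |x₄|` on the cone, and `ρ` cancels.
-/

open MeasureTheory Metric
open scoped ENNReal

noncomputable section

/-- `ω_n`: the Lebesgue volume of the unit ball in `ℝ^n`. -/
def omegaBall (n : ℕ) : ℝ := (volume (ball (0 : EuclideanSpace ℝ (Fin n)) 1)).toReal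

/-- `u(x) = (x₁² + x₂² + x₃² − x₄²) / (2√2 ωₙ √(x₁² + x₂² + x₃²))`. -/
def uCone (n : ℕ) (x : EuclideanSpace ℝ (Fin (n+1))) : ℝ :=
  ((x 0) ^ 2 + (x 1) ^ 2 + (x 2) ^ 2 - (x 3) ^ 2) /
    (2 * Real.sqrt 2 * omegaBall n * Real.sqrt ((x 0) ^ 2 + (x 1) ^ 2 + (x 2) ^ 2))

/-- The inward unit normal `ν(Q) = (1/√2)((x₁,x₂,x₃)/ρ, −x₄/|x₄|, 0, …, 0)` to the cone
`∂Ω = {x₄² = x₁² + x₂² + x₃²}` at a point `Q` with `x₄(Q) ≠ 0`, where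
`ρ = √(x₁² + x₂² + x₃²)`. -/
def coneNormal (n : ℕ) (Q : EuclideanSpace ℝ (Fin (n+1))) : EuclideanSpace ℝ (Fin (n+1)) :=
  (EuclideanSpace.equiv (Fin (n+1)) ℝ).symm (fun i =>
    if (i : ℕ) < 3 then
      Q i / (Real.sqrt 2 * Real.sqrt ((Q 0) ^ 2 + (Q 1) ^ 2 + (Q 2) ^ 2))
    else if (i : ℕ) = 3 then
      -(Q 3) / (Real.sqrt 2 * |Q 3|)
    else 0)

theorem HasFDerivAt.div_of_apply_eq_zero {𝕜 E : Type*} [NontriviallyNormedField 𝕜]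
    [NormedAddCommGroup E] [NormedSpace 𝕜 E] {f g : E → 𝕜} {f' : E →L[𝕜] 𝕜} {x : E}
    (hf : HasFDerivAt f f' x) (hg : DifferentiableAt 𝕜 g x) (hfx : f x = 0) (hgx : g x ≠ 0) :
    HasFDerivAt (fun y => f y / g y) ((g x)⁻¹ • f') x := by
  simp only [div_eq_mul_inv]
  refine (hf.fun_mul (hg.inv hgx).hasFDerivAt).congr_fderiv ?_
  ext v
  simp [hfx]

theorem EuclideanSpace.hasFDerivAt_apply_sq {ι : Type*} [Fintype ι] (i : ι)
    (x : EuclideanSpace ℝ ι) :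
    HasFDerivAt (fun y : EuclideanSpace ℝ ι => y i ^ 2)
      ((2 * x i) • EuclideanSpace.proj (𝕜 := ℝ) i) x := by
  refine ((EuclideanSpace.proj (𝕜 := ℝ) i).hasFDerivAt.pow 2).congr_fderiv ?_
  simp

theorem omegaBall_pos (n : ℕ) : 0 < omegaBall n :=
  ENNReal.toReal_pos (measure_ball_pos volume 0 one_pos).ne' measure_ball_lt_top.ne

section Cone

open EuclideanSpace

variable {n : ℕ}

def spatialSq (x : EuclideanSpace ℝ (Fin (n + 1))) : ℝ := x 0 ^ 2 + x 1 ^ 2 + x 2 ^ 2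

theorem uCone_eq_div :
    uCone n = fun x => (spatialSq x - x 3 ^ 2) /
      (2 * Real.sqrt 2 * omegaBall n * Real.sqrt (spatialSq x)) :=
  rfl

theorem hasFDerivAt_spatialSq (x : EuclideanSpace ℝ (Fin (n + 1))) :
    HasFDerivAt spatialSq
      ((2 * x 0) • proj (𝕜 := ℝ) 0 + (2 * x 1) • proj 1 + (2 * x 2) • proj 2) x :=
  ((hasFDerivAt_apply_sq 0 x).add (hasFDerivAt_apply_sq 1 x)).add (hasFDerivAt_apply_sq 2 x)

theorem coneNormal_apply_of_lt (Q : EuclideanSpace ℝ (Fin (n + 1))) {i : Fin (n + 1)}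
    (hi : (i : ℕ) < 3) :
    coneNormal n Q i = Q i / (Real.sqrt 2 * Real.sqrt (spatialSq Q)) :=
  if_pos hi

theorem coneNormal_apply_of_val_eq_three (Q : EuclideanSpace ℝ (Fin (n + 1)))
    {i : Fin (n + 1)} (hi : (i : ℕ) = 3) :
    coneNormal n Q i = -Q 3 / (Real.sqrt 2 * |Q 3|) :=
  (if_neg (by omega)).trans (if_pos hi)

theorem sqrt_spatialSq_eq_abs {Q : EuclideanSpace ℝ (Fin (n + 1))}
    (hQ : Q 3 ^ 2 = spatialSq Q) : Real.sqrt (spatialSq Q) = |Q 3| := by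
  rw [← hQ, Real.sqrt_sq_eq_abs]

theorem spatialSq_sub_sq_deriv_coneNormal (hn : 3 ≤ n) (Q : EuclideanSpace ℝ (Fin (n + 1)))
    (hQ : Q 3 ^ 2 = spatialSq Q) (h4 : Q 3 ≠ 0) :
    2 * Q 0 * coneNormal n Q 0 + 2 * Q 1 * coneNormal n Q 1 + 2 * Q 2 * coneNormal n Q 2
      - 2 * Q 3 * coneNormal n Q 3 = 2 * Real.sqrt 2 * |Q 3| := by
  have h1 : ((1 : Fin (n + 1)) : ℕ) = 1 := by simp; omega
  have h2 : ((2 : Fin (n + 1)) : ℕ) = 2 := by simp; omega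
  have h3 : ((3 : Fin (n + 1)) : ℕ) = 3 := by simp; omega
  rw [coneNormal_apply_of_lt Q (by simp), coneNormal_apply_of_lt Q (by omega),
    coneNormal_apply_of_lt Q (by omega), coneNormal_apply_of_val_eq_three Q h3,
    sqrt_spatialSq_eq_abs hQ]
  simp only [spatialSq] at hQ
  field_simp
  rw [Real.sq_sqrt zero_le_two, sq_abs]
  linear_combination -hQ

end Cone

theorem stmt7 (n : ℕ) (hn : 3 ≤ n) (Q : EuclideanSpace ℝ (Fin (n+1)))
    (hQ : (Q 3) ^ 2 = (Q 0) ^ 2 + (Q 1) ^ 2 + (Q 2) ^ 2) (h4 : Q 3 ≠ 0) :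
    fderiv ℝ (uCone n) Q (coneNormal n Q) = 1 / omegaBall n := by
  have hρ : Real.sqrt (spatialSq Q) = |Q 3| := sqrt_spatialSq_eq_abs hQ
  have hden : DifferentiableAt ℝ
      (fun x => 2 * Real.sqrt 2 * omegaBall n * Real.sqrt (spatialSq x)) Q :=
    ((hasFDerivAt_spatialSq Q).differentiableAt.sqrt (by simp [spatialSq, ← hQ, h4])).const_mul _
  have hu := ((hasFDerivAt_spatialSq Q).fun_sub (EuclideanSpace.hasFDerivAt_apply_sq 3 Q))
    |>.div_of_apply_eq_zero hden (sub_eq_zero.2 hQ.symm)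
      (by simp [hρ, h4, (omegaBall_pos n).ne'])
  rw [uCone_eq_div, hu.fderiv]
  simp only [mul_inv_rev, smul_apply, sub_apply, add_apply, PiLp.proj_apply, smul_eq_mul]
  rw [spatialSq_sub_sq_deriv_coneNormal hn Q hQ h4, hρ]
  field_simp
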